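/- For complex numbers w, z, ε such that w + z ≠ 0, w ≠ 0, z ≠ 0, w ≠ ε, z ≠ ε, define F(w, z, ε) = ((w − z)/(w + z)) · ((ε + w)/w) · [ (z + ε)/(4z(w − ε)) − 1/(2(ε − z)) − 1/(4z) ]. Then F(w, z, ε) + F(z, w, ε) = 0 (whenever both terms are defined). -/
import Mathlib


/-- The homogeneity-two preexponential factor of the kernel comparison. -/
noncomputable def F2 (w z ε : ℂ) : ℂ :=
  ((w - z)/(w + z)) * ((ε + w)/w) *
    ((z + ε)/(4*z*(w - ε)) - 1/(2*(ε - z)) - 1/(4*z))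

/-- `F2` as a single fraction. -/
lemma F2_eq (w z ε : ℂ)
    (h1 : w + z ≠ 0) (h2 : w ≠ 0) (h3 : z ≠ 0) (h4 : w ≠ ε) (h5 : z ≠ ε) :
    F2 w z ε =
      ((w-z)*(ε+w)*(((z+ε)*(2*(ε-z)) - 4*z*(w-ε)*1)*(4*z) - 4*z*(w-ε)*(2*(ε-z))*1)) /
        ((w+z)*(w*(4*z*(w-ε)*(2*(ε-z))*(4*z)))) := by
  have hwe : w - ε ≠ 0 := sub_ne_zero.mpr h4
  have hze : z - ε ≠ 0 := sub_ne_zero.mpr h5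
  have hez : ε - z ≠ 0 := fun h => hze (by linear_combination -h)
  have hA : 4*z*(w-ε) ≠ 0 := by
    refine mul_ne_zero (mul_ne_zero ?_ h3) hwe; norm_num
  have hB : 2*(ε-z) ≠ 0 := by
    refine mul_ne_zero ?_ hez; norm_num
  have hC : (4:ℂ)*z ≠ 0 := by
    refine mul_ne_zero ?_ h3; norm_num
  unfold F2
  rw [div_sub_div _ _ hA hB, div_sub_div _ _ (mul_ne_zero hA hB) hC,
    div_mul_div_comm, div_mul_div_comm]
  congr 1
  ring

/-- The symmetrized homogeneity-two preexponential factor vanishes: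
`F(w,z,ε) + F(z,w,ε) = 0`. -/
theorem sym_homogeneity_two (w z ε : ℂ)
    (h1 : w + z ≠ 0) (h2 : w ≠ 0) (h3 : z ≠ 0) (h4 : w ≠ ε) (h5 : z ≠ ε) :
    F2 w z ε + F2 z w ε = 0 := by
  have hwe : w - ε ≠ 0 := sub_ne_zero.mpr h4
  have hze : z - ε ≠ 0 := sub_ne_zero.mpr h5
  have hez : ε - z ≠ 0 := fun h => hze (by linear_combination -h)
  have hew : ε - w ≠ 0 := fun h => hwe (by linear_combination -h)
  have hzw : z + w ≠ 0 := fun h => h1 (by linear_combination h)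
  have hD1 : (w+z)*(w*(4*z*(w-ε)*(2*(ε-z))*(4*z))) ≠ 0 := by
    apply mul_ne_zero h1
    apply mul_ne_zero h2
    apply mul_ne_zero
    apply mul_ne_zero
    apply mul_ne_zero (mul_ne_zero (by norm_num) h3) hwe
    exact mul_ne_zero (by norm_num) hez
    exact mul_ne_zero (by norm_num) h3
  have hD2 : (z+w)*(z*(4*w*(z-ε)*(2*(ε-w))*(4*w))) ≠ 0 := by
    apply mul_ne_zero hzw
    apply mul_ne_zero h3
    apply mul_ne_zero
    apply mul_ne_zero
    apply mul_ne_zero (mul_ne_zero (by norm_num) h2) hze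
    exact mul_ne_zero (by norm_num) hew
    exact mul_ne_zero (by norm_num) h2
  rw [F2_eq w z ε h1 h2 h3 h4 h5, F2_eq z w ε hzw h3 h2 h5 h4,
    div_add_div _ _ hD1 hD2, div_eq_zero_iff]
  left; ring
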